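/- For every m ≥ 1, every ordinal of type m is strictly smaller than ε₀; consequently the order type of ℕ equipped with <_m is strictly below ε₀. -/

import Mathlib

/-- `ν n` is the exponent of 2 in `n + 1` (the 2-adic valuation of `n+1`). -/
def nuFn (n : ℕ) : ℕ := (n + 1).factorization 2

/-- `θ n = ((n+1) / 2 ^ ν n - 1) / 2`, so that `n + 1 = 2 ^ ν n * (2 * θ n + 1)`. -/
def thetaFn (n : ℕ) : ℕ := ((n + 1) / 2 ^ nuFn n - 1) / 2

/-- The order `<₁` on ℕ : compare the pairs `(ν n, θ n)` lexicographically. -/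
def lt1 (n n' : ℕ) : Prop :=
  Prod.Lex (· < ·) (· < ·) (nuFn n, thetaFn n) (nuFn n', thetaFn n')

/-- `DecExpList r n l` : `l` lists the exponents of the binary expansion of `n`
in `r`-decreasing order. -/
def DecExpList (r : ℕ → ℕ → Prop) (n : ℕ) (l : List ℕ) : Prop :=
  l.Chain' (fun a b => r b a) ∧ ∀ i : ℕ, i ∈ l ↔ n.testBit i

/-- The derived order `≺'` : compare the `r`-decreasing lists of binary exponents
lexicographically (via `List.Lex`, a proper initial segment counting as smaller):
either the lists agree up to position `k` and then `r` holds at position `k`, or the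
first list is a proper prefix of the second. -/
def derivedOrder (r : ℕ → ℕ → Prop) (n n' : ℕ) : Prop :=
  ∃ l l' : List ℕ, DecExpList r n l ∧ DecExpList r n' l' ∧ List.Lex r l l'

/-- The orders `<_m` on ℕ (for `m ≥ 1`): `<₁` is `lt1`, and `<_{m+1}` is the
derived order of `<_m`.  (The value at `m = 0` is irrelevant; we set it to `lt1`.) -/
def ltm : ℕ → ℕ → ℕ → Prop
  | 0 => lt1
  | 1 => lt1
  | (m + 2) => derivedOrder (ltm (m + 1))

/-- The ordinals of type `m`: `T₁ = {ω·a + b : a b ∈ ℕ}`, and `T_{m+1}` consists of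
the sums `ω^{α₁} + ⋯ + ω^{α_i}` with `α₁ > ⋯ > α_i` all in `T_m` (empty sum = 0). -/
def OrdType : ℕ → Set Ordinal
  | 0 => ∅
  | 1 => {o | ∃ a b : ℕ, o = Ordinal.omega0 * a + b}
  | (m + 2) => {o | ∃ l : List Ordinal, l.Chain' (· > ·) ∧
      (∀ α ∈ l, α ∈ OrdType (m + 1)) ∧
      o = (l.map fun α => Ordinal.omega0 ^ α).sum}

/-- `ε₀` : the least ordinal `ε` with `ω ^ ε = ε`. -/
noncomputable def eps0 : Ordinal := sInf {ε : Ordinal | Ordinal.omega0 ^ ε = ε}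

open Ordinal

/-! ### ε₀ basics -/

lemma eps0_fix : Ordinal.omega0 ^ eps0 = eps0 := by
  have : ({ε : Ordinal | Ordinal.omega0 ^ ε = ε}).Nonempty :=
    ⟨nfp (Ordinal.omega0 ^ ·) 0, nfp_fp (isNormal_opow one_lt_omega0) 0⟩
  exact csInf_mem this

lemma omega0_lt_eps0' : Ordinal.omega0 < eps0 := by
  have hfix := eps0_fix
  have h0 : eps0 ≠ 0 := by
    intro h; rw [h, opow_zero] at hfix; exact one_ne_zero hfix
  have h1 : (1 : Ordinal) ≤ eps0 := Ordinal.one_le_iff_ne_zero.2 h0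
  have hom : Ordinal.omega0 ≤ eps0 := by
    calc Ordinal.omega0 = Ordinal.omega0 ^ (1 : Ordinal) := (opow_one _).symm
    _ ≤ Ordinal.omega0 ^ eps0 := opow_le_opow_right omega0_pos h1
    _ = eps0 := hfix
  rcases lt_or_eq_of_le hom with h | h
  · exact h
  · exfalso
    have h2 : Ordinal.omega0 ^ (1:Ordinal) < Ordinal.omega0 ^ eps0 := by
      apply (opow_lt_opow_iff_right one_lt_omega0).2
      rw [← h]; simpa using one_lt_omega0
    rw [opow_one, hfix, ← h] at h2
    exact lt_irrefl _ h2

lemma opow_lt_eps0' {β : Ordinal} (h : β < eps0) : Ordinal.omega0 ^ β < eps0 := by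
  conv_rhs => rw [← eps0_fix]
  exact (opow_lt_opow_iff_right one_lt_omega0).2 h

lemma omega0_mul_omega0_lt_eps0 : Ordinal.omega0 * Ordinal.omega0 < eps0 := by
  have h2 : (2 : Ordinal) < eps0 := by
    refine lt_trans ?_ omega0_lt_eps0'
    exact_mod_cast nat_lt_omega0 2
  have : Ordinal.omega0 ^ ((1:Ordinal) + 1) = Ordinal.omega0 * Ordinal.omega0 := by
    rw [opow_one_add, opow_one]
  rw [← this]
  apply opow_lt_eps0'
  norm_num
  exact h2

/-! ### sums of ω-powers over decreasing lists -/

lemma sum_opow_lt' {L : List Ordinal} {β : Ordinal} (h : ∀ a ∈ L, a < β) :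
    (L.map (Ordinal.omega0 ^ ·)).sum < Ordinal.omega0 ^ β := by
  induction L with
  | nil => simpa using opow_pos β omega0_pos
  | cons a t ih =>
      simp only [List.map_cons, List.sum_cons]
      exact principal_add_omega0_opow β
        ((opow_lt_opow_iff_right one_lt_omega0).2 (h a (by simp)))
        (ih fun x hx => h x (by simp [hx]))

lemma chain'_gt_head {a : Ordinal} {t : List Ordinal} (h : (a :: t).Chain' (· > ·)) :
    ∀ x ∈ t, x < a := by
  haveI : IsTrans Ordinal (· > ·) := ⟨fun a b c h1 h2 => lt_trans h2 h1⟩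
  rcases List.pairwise_cons.1 (List.isChain_iff_pairwise.1 h) with ⟨h1, _⟩
  exact h1

lemma lex_sum_lt : ∀ {L L' : List Ordinal}, List.Lex (· < ·) L L' →
    L.Chain' (· > ·) → L'.Chain' (· > ·) →
    (L.map (Ordinal.omega0 ^ ·)).sum < (L'.map (Ordinal.omega0 ^ ·)).sum := by
  intro L L' hlex
  induction hlex with
  | @nil b t =>
      intro _ _
      simp only [List.map_cons, List.map_nil, List.sum_cons, List.sum_nil]
      calc (0:Ordinal) < Ordinal.omega0 ^ b := opow_pos b omega0_pos
      _ ≤ _ := le_self_add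
  | @cons a t t' hlex ih =>
      intro hL hL'
      simp only [List.map_cons, List.sum_cons]
      exact add_lt_add_right (ih hL.tail hL'.tail) _
  | @rel a t b t' hab =>
      intro hL hL'
      simp only [List.map_cons, List.sum_cons]
      have h1 : ((a :: t).map (Ordinal.omega0 ^ ·)).sum < Ordinal.omega0 ^ b := by
        apply sum_opow_lt'
        intro x hx
        rcases List.mem_cons.1 hx with h | h
        · exact h ▸ hab
        · exact lt_trans (chain'_gt_head hL x h) hab
      calc ((a :: t).map (Ordinal.omega0 ^ ·)).sum < Ordinal.omega0 ^ b := by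
            simpa using h1
      _ ≤ _ := le_self_add

/-! ### the base order `<₁` -/

lemma nu_theta (n : ℕ) : n + 1 = 2 ^ nuFn n * (2 * thetaFn n + 1) := by
  have h1 : 2 ^ nuFn n * ((n+1) / 2 ^ nuFn n) = n + 1 :=
    Nat.ordProj_mul_ordCompl_eq_self (n+1) 2
  have hodd : ¬ 2 ∣ ((n+1) / 2 ^ nuFn n) :=
    Nat.not_dvd_ordCompl Nat.prime_two (Nat.succ_ne_zero n)
  set x := (n+1) / 2 ^ nuFn n with hx
  have hmod : x % 2 = 1 := Nat.two_dvd_ne_zero.mp hodd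
  have hxk : x = 2 * (x / 2) + 1 := by omega
  have htheta : thetaFn n = x / 2 := by
    unfold thetaFn
    rw [← hx, hxk]
    simp [Nat.mul_add_div]
  rw [htheta, ← hxk, h1]

lemma lex_iff (x y u v : ℕ) :
    Prod.Lex (· < ·) (· < ·) (x, y) (u, v) ↔
      Ordinal.omega0 * x + y < Ordinal.omega0 * u + v := by
  constructor
  · intro h
    rcases Prod.lex_iff.1 h with h | ⟨h1, h2⟩
    · have hy : (y : Ordinal) < Ordinal.omega0 := nat_lt_omega0 y
      calc Ordinal.omega0 * x + y < Ordinal.omega0 * x + Ordinal.omega0 :=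
            add_lt_add_right hy _
      _ = Ordinal.omega0 * ((x:Ordinal) + 1) := by rw [mul_add_one]
      _ ≤ Ordinal.omega0 * u := by
            apply mul_le_mul_of_nonneg_left ?_ zero_le
            exact_mod_cast Nat.succ_le_of_lt h
      _ ≤ Ordinal.omega0 * u + v := le_self_add
    · cases h1
      exact add_lt_add_right (Nat.cast_lt.2 h2) _
  · intro h
    rcases lt_trichotomy x u with hx | hx | hx
    · exact Prod.Lex.left _ _ hx
    · subst hx
      have h2 : (y : Ordinal) < v := lt_of_add_lt_add_left h
      exact Prod.Lex.right _ (by exact_mod_cast h2)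
    · exfalso
      have hlt : Ordinal.omega0 * u + v < Ordinal.omega0 * x + y := by
        have hy : (v : Ordinal) < Ordinal.omega0 := nat_lt_omega0 v
        calc Ordinal.omega0 * u + v < Ordinal.omega0 * u + Ordinal.omega0 :=
              add_lt_add_right hy _
        _ = Ordinal.omega0 * ((u:Ordinal) + 1) := by rw [mul_add_one]
        _ ≤ Ordinal.omega0 * x := by
              apply mul_le_mul_of_nonneg_left ?_ zero_le
              exact_mod_cast Nat.succ_le_of_lt hx
        _ ≤ Ordinal.omega0 * x + y := le_self_add
      exact absurd h (not_lt.2 hlt.le)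

noncomputable def f1 (n : ℕ) : Ordinal := Ordinal.omega0 * (nuFn n) + (thetaFn n)

lemma lt1_iff_f1 (a b : ℕ) : lt1 a b ↔ f1 a < f1 b := lex_iff _ _ _ _

lemma f1_inj : Function.Injective f1 := by
  intro a b hab
  unfold f1 at hab
  have hnu : nuFn a = nuFn b := by
    rcases lt_trichotomy (nuFn a) (nuFn b) with h | h | h
    · exact absurd hab (ne_of_lt ((lex_iff _ _ _ _).1 (Prod.Lex.left _ _ h)))
    · exact h
    · exact absurd hab.symm (ne_of_lt ((lex_iff _ _ _ _).1 (Prod.Lex.left _ _ h)))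
  have hth : thetaFn a = thetaFn b := by
    rw [hnu] at hab
    have h2 : ((thetaFn a : Ordinal)) = thetaFn b := (add_right_inj _).1 hab
    exact_mod_cast h2
  have hh := nu_theta a
  rw [hnu, hth, ← nu_theta b] at hh
  omega

lemma f1_lt : ∀ n, f1 n < Ordinal.omega0 * Ordinal.omega0 := by
  intro n
  unfold f1
  have hy : ((thetaFn n : ℕ) : Ordinal) < Ordinal.omega0 := nat_lt_omega0 _
  calc Ordinal.omega0 * (nuFn n) + (thetaFn n)
      < Ordinal.omega0 * (nuFn n) + Ordinal.omega0 := add_lt_add_right hy _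
  _ = Ordinal.omega0 * ((nuFn n : Ordinal) + 1) := by rw [mul_add_one]
  _ ≤ Ordinal.omega0 * Ordinal.omega0 := by
        apply mul_le_mul_of_nonneg_left ?_ zero_le
        exact_mod_cast (nat_lt_omega0 (nuFn n + 1)).le

/-! ### the derived-order step -/

noncomputable section Derived

variable (f : ℕ → Ordinal)

/-- canonical decreasing list of bit indices, sorted by decreasing `f`-value -/
def expL (n : ℕ) : List ℕ :=
  ((Finset.range (n+1)).filter (fun i => n.testBit i = true)).toList.mergeSort
    (fun a b => decide (f b ≤ f a))

lemma expL_perm (n : ℕ) :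
    (expL f n).Perm ((Finset.range (n+1)).filter (fun i => n.testBit i = true)).toList :=
  List.mergeSort_perm _ _

lemma mem_expL (n i : ℕ) : i ∈ expL f n ↔ n.testBit i := by
  rw [(expL_perm f n).mem_iff]
  simp only [Finset.mem_toList, Finset.mem_filter, Finset.mem_range]
  constructor
  · rintro ⟨-, h⟩; exact h
  · intro h
    refine ⟨?_, h⟩
    have h2 : 2 ^ i ≤ n := Nat.ge_two_pow_of_testBit h
    have h3 : i < 2 ^ i := Nat.lt_two_pow_self
    omega

lemma expL_nodup (n : ℕ) : (expL f n).Nodup :=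
  (expL_perm f n).nodup_iff.2 (Finset.nodup_toList _)

/-- the value of the derived embedding -/
def FF (n : ℕ) : Ordinal := (((expL f n).map f).map (Ordinal.omega0 ^ ·)).sum

variable {f} (hinj : Function.Injective f)
include hinj

lemma expL_pairwise (n : ℕ) :
    (expL f n).Pairwise (fun a b => f b < f a) := by
  have hs : (expL f n).Pairwise (fun a b => decide (f b ≤ f a) = true) := by
    apply List.pairwise_mergeSort
    · intro a b c h1 h2
      simp only [decide_eq_true_eq] at *
      exact le_trans h2 h1
    · intro a b
      rcases le_total (f b) (f a) with h | h <;> simp [h]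
  have hand := hs.and (expL_nodup f n)
  apply hand.imp
  rintro a b ⟨h1, h2⟩
  simp only [decide_eq_true_eq] at h1
  exact lt_of_le_of_ne h1 (fun hc => h2 (hinj hc.symm))

lemma expL_map_chain (n : ℕ) : ((expL f n).map f).Chain' (· > ·) :=
  (List.pairwise_map (R := fun x y => x > y)).2 (expL_pairwise hinj n) |>.isChain

lemma FF_lt {B : Ordinal} (hB : ∀ n, f n < B) (n : ℕ) :
    FF f n < Ordinal.omega0 ^ B := by
  unfold FF
  apply sum_opow_lt'
  intro x hx
  rcases List.mem_map.1 hx with ⟨i, -, rfl⟩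
  exact hB i

variable {r : ℕ → ℕ → Prop} (hr : ∀ a b, r a b ↔ f a < f b)
include hr

lemma decExpList_expL (n : ℕ) : DecExpList r n (expL f n) := by
  refine ⟨?_, fun i => mem_expL f n i⟩
  exact ((expL_pairwise hinj n).imp (fun h => (hr _ _).2 h)).isChain

lemma decExpList_eq {n : ℕ} {l : List ℕ} (hl : DecExpList r n l) : l = expL f n := by
  obtain ⟨hchain, hmem⟩ := hl
  haveI : IsTrans ℕ (fun a b => r b a) :=
    ⟨fun a b c h1 h2 => (hr _ _).2 (lt_trans ((hr _ _).1 h2) ((hr _ _).1 h1))⟩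
  have hpair : l.Pairwise (fun a b => f b < f a) :=
    (List.isChain_iff_pairwise.1 hchain).imp (fun h => (hr _ _).1 h)
  have hnodup : l.Nodup := hpair.imp (fun h => fun hc => absurd (hc ▸ h) (lt_irrefl _))
  haveI : IsAntisymm ℕ (fun a b => f b < f a) :=
    ⟨fun a b h1 h2 => absurd (lt_trans h1 h2) (lt_irrefl _)⟩
  apply List.Perm.eq_of_pairwise (fun a b _ _ (h1 : f b < f a) (h2 : f a < f b) => absurd (lt_trans h1 h2) (lt_irrefl _)) hpair (expL_pairwise hinj n) ?_
  apply List.perm_of_nodup_nodup_toFinset_eq hnodup (expL_nodup f n)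
  ext i
  simp only [List.mem_toFinset]
  rw [hmem i, mem_expL f n i]

omit hinj in
lemma lex_map {l l' : List ℕ} (h : List.Lex r l l') :
    List.Lex (· < ·) (l.map f) (l'.map f) := by
  induction h with
  | nil => exact List.Lex.nil
  | cons _ ih => exact List.Lex.cons ih
  | rel hab => exact List.Lex.rel ((hr _ _).1 hab)

lemma r_total (a b : ℕ) : r a b ∨ a = b ∨ r b a := by
  rcases lt_trichotomy (f a) (f b) with h | h | h
  · exact Or.inl ((hr _ _).2 h)
  · exact Or.inr (Or.inl (hinj h))
  · exact Or.inr (Or.inr ((hr _ _).2 h))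

lemma lex_total : ∀ l l' : List ℕ, List.Lex r l l' ∨ l = l' ∨ List.Lex r l' l := by
  intro l
  induction l with
  | nil =>
      intro l'
      cases l' with
      | nil => exact Or.inr (Or.inl rfl)
      | cons b t => exact Or.inl List.Lex.nil
  | cons a t ih =>
      intro l'
      cases l' with
      | nil => exact Or.inr (Or.inr List.Lex.nil)
      | cons b t' =>
          rcases r_total hinj hr a b with h | h | h
          · exact Or.inl (List.Lex.rel h)
          · subst h
            rcases ih t' with h | h | h
            · exact Or.inl (List.Lex.cons h)
            · exact Or.inr (Or.inl (by rw [h]))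
            · exact Or.inr (Or.inr (List.Lex.cons h))
          · exact Or.inr (Or.inr (List.Lex.rel h))

lemma derived_of_lt {a b : ℕ} (h : derivedOrder r a b) : FF f a < FF f b := by
  obtain ⟨l, l', hl, hl', hlex⟩ := h
  rw [decExpList_eq hinj hr hl, decExpList_eq hinj hr hl'] at hlex
  exact lex_sum_lt (lex_map hr hlex) (expL_map_chain hinj a) (expL_map_chain hinj b)

lemma derived_total {a b : ℕ} (hne : a ≠ b) :
    derivedOrder r a b ∨ derivedOrder r b a := by
  have hLne : expL f a ≠ expL f b := by
    intro hc
    apply hne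
    apply Nat.eq_of_testBit_eq
    intro i
    have h1 := mem_expL f a i
    have h2 := mem_expL f b i
    rw [hc] at h1
    exact Bool.eq_iff_iff.mpr (h1.symm.trans h2)
  rcases lex_total hinj hr (expL f a) (expL f b) with h | h | h
  · exact Or.inl ⟨_, _, decExpList_expL hinj hr a, decExpList_expL hinj hr b, h⟩
  · exact absurd h hLne
  · exact Or.inr ⟨_, _, decExpList_expL hinj hr b, decExpList_expL hinj hr a, h⟩

lemma derived_iff (a b : ℕ) : derivedOrder r a b ↔ FF f a < FF f b := by
  constructor
  · exact derived_of_lt hinj hr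
  · intro h
    have hne : a ≠ b := by rintro rfl; exact lt_irrefl _ h
    rcases derived_total hinj hr hne with hd | hd
    · exact hd
    · exact absurd (derived_of_lt hinj hr hd) (lt_asymm h)

lemma FF_inj : Function.Injective (FF f) := by
  intro a b h
  by_contra hne
  rcases derived_total hinj hr hne with hd | hd
  · exact absurd h (ne_of_lt (derived_of_lt hinj hr hd))
  · exact absurd h.symm (ne_of_lt (derived_of_lt hinj hr hd))

end Derived

/-! ### the main recursion -/

lemma key : ∀ m : ℕ, ∃ B, B < eps0 ∧ ∃ f : ℕ → Ordinal, Function.Injective f ∧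
    (∀ a b, ltm (m+1) a b ↔ f a < f b) ∧ ∀ n, f n < B := by
  intro m
  induction m with
  | zero =>
      exact ⟨Ordinal.omega0 * Ordinal.omega0, omega0_mul_omega0_lt_eps0, f1, f1_inj,
        lt1_iff_f1, f1_lt⟩
  | succ k ih =>
      obtain ⟨B, hB, f, hinj, hiff, hbd⟩ := ih
      refine ⟨Ordinal.omega0 ^ B, opow_lt_eps0' hB, FF f, FF_inj hinj hiff, ?_,
        FF_lt hinj hbd⟩
      intro a b
      show derivedOrder (ltm (k+1)) a b ↔ _
      exact derived_iff hinj hiff a b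

lemma typein_le_of_iff {r : ℕ → ℕ → Prop} (h : IsWellOrder ℕ r) {f : ℕ → Ordinal}
    (hr : ∀ a b, r a b ↔ f a < f b) : ∀ x, @Ordinal.typein _ r h x ≤ f x := by
  haveI := h
  intro x
  refine h.toIsWellFounded.wf.induction
    (C := fun x => Ordinal.typein r x ≤ f x) x ?_
  intro y ih
  apply le_of_forall_lt
  intro o ho
  obtain ⟨z, rfl⟩ := Ordinal.typein_surj r (lt_trans ho (Ordinal.typein_lt_type r y))
  have hzy : r z y := (Ordinal.typein_lt_typein r).1 ho
  exact lt_of_le_of_lt (ih z hzy) ((hr z y).1 hzy)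

/-! ### part 1 : ordinals of type m are below ε₀ -/

lemma part1 : ∀ m : ℕ, 1 ≤ m → ∀ α ∈ OrdType m, α < eps0 := by
  intro m
  induction m using Nat.strong_induction_on with
  | _ m ih =>
    match m with
    | 0 => intro h; omega
    | 1 =>
        intro _ α hα
        obtain ⟨a, b, rfl⟩ := hα
        have hb : (b : Ordinal) < Ordinal.omega0 := nat_lt_omega0 b
        calc Ordinal.omega0 * a + b < Ordinal.omega0 * a + Ordinal.omega0 :=
              add_lt_add_right hb _
        _ = Ordinal.omega0 * ((a:Ordinal) + 1) := by rw [mul_add_one]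
        _ ≤ Ordinal.omega0 * Ordinal.omega0 := by
              apply mul_le_mul_of_nonneg_left ?_ zero_le
              exact_mod_cast (nat_lt_omega0 (a + 1)).le
        _ < eps0 := omega0_mul_omega0_lt_eps0
    | (k+2) =>
        intro _ α hα
        obtain ⟨l, hchain, hmem, rfl⟩ := hα
        have hsum : ((l.map fun α => Ordinal.omega0 ^ α)).sum < Ordinal.omega0 ^ eps0 := by
          apply sum_opow_lt'
          intro x hx
          exact ih (k+1) (by omega) (by omega) x (hmem x hx)
        rwa [eps0_fix] at hsum

/-! ### main theorem -/

/-- Every ordinal of type `m` (`m ≥ 1`) is `< ε₀`; consequently the order type of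
`(ℕ, <_m)` is strictly below `ε₀`. -/
theorem ordType_lt_eps0 :
    (∀ m : ℕ, 1 ≤ m → ∀ α ∈ OrdType m, α < eps0) ∧
    (∀ m : ℕ, 1 ≤ m → ∀ h : IsWellOrder ℕ (ltm m),
      @Ordinal.type ℕ (ltm m) h < eps0) := by
  constructor
  · exact part1
  · intro m hm h
    haveI := h
    obtain ⟨k, rfl⟩ : ∃ k, m = k + 1 := ⟨m - 1, by omega⟩
    obtain ⟨B, hB, f, hinj, hiff, hbd⟩ := key k
    have htype : @Ordinal.type ℕ (ltm (k+1)) h ≤ B := by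
      apply le_of_forall_lt
      intro o ho
      obtain ⟨x, rfl⟩ := Ordinal.typein_surj (ltm (k+1)) ho
      exact lt_of_le_of_lt (typein_le_of_iff h hiff x) (hbd x)
    exact lt_of_le_of_lt htype hB
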